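/- Suppose a function V : [0,∞)^d → ℝ satisfies both inequalities V(y) ≤ V(x) - f(x)·(x-y)^+ + g(x)·(x-y)^- and V(x) ≤ V(y) - f(y)·(y-x)^+ + g(y)·(y-x)^- for all x, y ∈ [0,∞)^d, where f, g : [0,∞)^d → (0,∞)^d are componentwise non-increasing. If V(0) < ∞, then V(x) < ∞ for all x, and V is Lipschitz continuous with Lipschitz constant 2|f(0) + g(0)| (with respect to the appropriate norms). -/

import Mathlib

/-! In the shift inequality for the pair `(y, x)` the `f`-term only lowers the bound, while the
`g`-term is at most `∑ i, g 0 i * ‖x - y‖` because `g` is non-increasing and `y ≥ 0`. Hence `V` is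
even Lipschitz with constant `∑ i, g 0 i`, which is at most `2 * ∑ i, (f 0 i + g 0 i)`. -/

open Finset

theorem sum_mul_max_le_sum_mul_norm {ι : Type*} [Fintype ι] {c c' : ι → ℝ}
    (hc : ∀ i, 0 ≤ c i) (hcc' : ∀ i, c i ≤ c' i) (v : ι → ℝ) :
    ∑ i, c i * max (v i) 0 ≤ (∑ i, c' i) * ‖v‖ := by
  rw [sum_mul]
  gcongr with i
  · exact (hc i).trans (hcc' i)
  · exact hcc' i
  · exact max_le ((le_abs_self _).trans (norm_le_pi_norm v i)) (norm_nonneg v)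

section ShiftInequalities

variable {d : ℕ} {V : (Fin d → ℝ) → ℝ} {f g : (Fin d → ℝ) → Fin d → ℝ}

theorem sub_le_sum_mul_norm_of_shift_ineq
    (hfpos : ∀ x i, 0 < f x i) (hgpos : ∀ x i, 0 < g x i)
    (hgmono : ∀ x y : Fin d → ℝ, (∀ i, x i ≤ y i) → ∀ i, g y i ≤ g x i)
    (hineq : ∀ x y : Fin d → ℝ, (∀ i, 0 ≤ x i) → (∀ i, 0 ≤ y i) →
      V y ≤ V x - (∑ i, f x i * max (x i - y i) 0)
        + (∑ i, g x i * max (-(x i - y i)) 0))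
    {a b : Fin d → ℝ} (ha : ∀ i, 0 ≤ a i) (hb : ∀ i, 0 ≤ b i) :
    V a - V b ≤ (∑ i, g 0 i) * ‖a - b‖ := by
  have hf : 0 ≤ ∑ i, f b i * max (b i - a i) 0 :=
    sum_nonneg fun i _ => mul_nonneg (hfpos b i).le (le_max_right _ _)
  have hg : ∑ i, g b i * max (-(b i - a i)) 0 ≤ (∑ i, g 0 i) * ‖a - b‖ := by
    simpa only [neg_sub, Pi.sub_apply] using
      sum_mul_max_le_sum_mul_norm (fun i => (hgpos b i).le) (hgmono 0 b hb) (a - b)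
  linarith [hineq b a hb ha]

theorem abs_sub_le_sum_mul_norm_of_shift_ineq
    (hfpos : ∀ x i, 0 < f x i) (hgpos : ∀ x i, 0 < g x i)
    (hgmono : ∀ x y : Fin d → ℝ, (∀ i, x i ≤ y i) → ∀ i, g y i ≤ g x i)
    (hineq : ∀ x y : Fin d → ℝ, (∀ i, 0 ≤ x i) → (∀ i, 0 ≤ y i) →
      V y ≤ V x - (∑ i, f x i * max (x i - y i) 0)
        + (∑ i, g x i * max (-(x i - y i)) 0))
    {x y : Fin d → ℝ} (hx : ∀ i, 0 ≤ x i) (hy : ∀ i, 0 ≤ y i) :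
    |V x - V y| ≤ (∑ i, g 0 i) * ‖x - y‖ := by
  refine abs_sub_le_iff.2 ⟨?_, ?_⟩
  · exact sub_le_sum_mul_norm_of_shift_ineq hfpos hgpos hgmono hineq hx hy
  · rw [norm_sub_rev]
    exact sub_le_sum_mul_norm_of_shift_ineq hfpos hgpos hgmono hineq hy hx

end ShiftInequalities

theorem stmt1_general {d : ℕ} (V : (Fin d → ℝ) → ℝ) (f g : (Fin d → ℝ) → Fin d → ℝ)
    (hfpos : ∀ x i, 0 < f x i) (hgpos : ∀ x i, 0 < g x i)
    (hgmono : ∀ x y : Fin d → ℝ, (∀ i, x i ≤ y i) → ∀ i, g y i ≤ g x i)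
    (hineq : ∀ x y : Fin d → ℝ, (∀ i, 0 ≤ x i) → (∀ i, 0 ≤ y i) →
      V y ≤ V x - (∑ i, f x i * max (x i - y i) 0)
        + (∑ i, g x i * max (-(x i - y i)) 0))
    (x y : Fin d → ℝ) (hx : ∀ i, 0 ≤ x i) (hy : ∀ i, 0 ≤ y i) :
    |V x - V y| ≤ 2 * (∑ i, (f 0 i + g 0 i)) * ‖x - y‖ := by
  have hg_le : ∑ i, g 0 i ≤ 2 * ∑ i, (f 0 i + g 0 i) := by
    rw [mul_sum]
    exact sum_le_sum fun i _ => by linarith [hfpos 0 i, hgpos 0 i]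
  calc |V x - V y| ≤ (∑ i, g 0 i) * ‖x - y‖ :=
        abs_sub_le_sum_mul_norm_of_shift_ineq hfpos hgpos hgmono hineq hx hy
    _ ≤ 2 * (∑ i, (f 0 i + g 0 i)) * ‖x - y‖ := by gcongr

/-- If `V` satisfies the two shift inequalities with positive,
componentwise non-increasing `f, g`, then `V` is Lipschitz with constant
`2|f(0)+g(0)|` (here the ℓ¹ norm of `f 0 + g 0` paired with the sup norm on
`Fin d → ℝ`). Since `V` is real-valued, finiteness is automatic. -/
theorem stmt1 {d : ℕ} (V : (Fin d → ℝ) → ℝ) (f g : (Fin d → ℝ) → Fin d → ℝ)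
    (hfpos : ∀ x i, 0 < f x i) (hgpos : ∀ x i, 0 < g x i)
    (hfmono : ∀ x y : Fin d → ℝ, (∀ i, x i ≤ y i) → ∀ i, f y i ≤ f x i)
    (hgmono : ∀ x y : Fin d → ℝ, (∀ i, x i ≤ y i) → ∀ i, g y i ≤ g x i)
    (hineq : ∀ x y : Fin d → ℝ, (∀ i, 0 ≤ x i) → (∀ i, 0 ≤ y i) →
      V y ≤ V x - (∑ i, f x i * max (x i - y i) 0)
        + (∑ i, g x i * max (-(x i - y i)) 0))
    (x y : Fin d → ℝ) (hx : ∀ i, 0 ≤ x i) (hy : ∀ i, 0 ≤ y i) :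
    |V x - V y| ≤ 2 * (∑ i, (f 0 i + g 0 i)) * ‖x - y‖ :=
  stmt1_general V f g hfpos hgpos hgmono hineq x y hx hy
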